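/- For every LDQL query q there exists an LDQL query q' such that q ≡ q' (their S-based evaluations coincide for every Web of Linked Data W and every finite set S of URIs) and every link path expression occurring in q' is built only from the symbol ε, the construction ⟨?v,q⟩, and the operator (·)* (i.e., q' uses no link patterns, no concatenation /, no disjunction |, and no test [·] in its LPEs). -/

import Mathlib

namespace LDQLFormal

noncomputable section
open Classical

/-! ### Basic RDF model -/

abbrev URI := ℕ
abbrev BNodeId := ℕ
abbrev LitId := ℕ
abbrev Var := ℕ
abbrev Doc := ℕ

/-- Subject terms: URIs or blank nodes. -/
inductive Subj where
  | uri (u : URI)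
  | bnode (b : BNodeId)
deriving DecidableEq

/-- RDF terms (objects): URIs, blank nodes, or literals. -/
inductive Obj where
  | uri (u : URI)
  | bnode (b : BNodeId)
  | lit (l : LitId)
deriving DecidableEq

structure RDFTriple where
  s : Subj
  p : URI
  o : Obj
deriving DecidableEq

def Subj.toObj : Subj → Obj
  | .uri u => .uri u
  | .bnode b => .bnode b

/-- The set of URIs occurring in an RDF triple. -/
def urisOf (t : RDFTriple) : Set URI :=
  {u | t.s = .uri u ∨ t.p = u ∨ t.o = .uri u}

/-- A Web of Linked Data: a finite set of documents, the data in each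
document (a finite set of RDF triples), and a surjective partial function
`adoc` from URIs to documents. -/
structure Web where
  docs : Set Doc
  finite_docs : docs.Finite
  data : Doc → Finset RDFTriple
  adoc : URI → Option Doc
  adoc_mem : ∀ u d, adoc u = some d → d ∈ docs
  adoc_surj : ∀ d ∈ docs, ∃ u, adoc u = some d

/-- Link graph edge `(d, (t,u), d')`. -/
def Web.edge (W : Web) (d : Doc) (t : RDFTriple) (u : URI) (d' : Doc) : Prop :=
  d ∈ W.docs ∧ t ∈ W.data d ∧ u ∈ urisOf t ∧ W.adoc u = some d'

/-! ### Link patterns -/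

/-- Components of a link pattern drawn from `U ∪ {*, +}`. -/
inductive LPUP where
  | uri (u : URI)
  | star
  | plus
deriving DecidableEq

/-- Components of a link pattern drawn from `U ∪ Lit ∪ {*, +}`. -/
inductive LPULP where
  | uri (u : URI)
  | lit (l : LitId)
  | star
  | plus
deriving DecidableEq

structure LinkPattern where
  c1 : LPUP
  c2 : LPUP
  c3 : LPULP

def matchSubj (y : LPUP) (uctx : URI) (x : Subj) : Prop :=
  match y with
  | .uri w => x = .uri w
  | .star => True
  | .plus => x = .uri uctx

def matchPred (y : LPUP) (uctx : URI) (x : URI) : Prop :=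
  match y with
  | .uri w => x = w
  | .star => True
  | .plus => x = uctx

def matchObj (y : LPULP) (uctx : URI) (x : Obj) : Prop :=
  match y with
  | .uri w => x = .uri w
  | .lit l => x = .lit l
  | .star => True
  | .plus => x = .uri uctx

/-- An edge with label `(t,u)` matches a link pattern in the context of `uctx`. -/
def lpMatch (lp : LinkPattern) (uctx : URI) (t : RDFTriple) (u : URI) : Prop :=
  ((lp.c1 = .star ∧ t.s = .uri u) ∨ (lp.c2 = .star ∧ t.p = u) ∨ (lp.c3 = .star ∧ t.o = .uri u))
  ∧ matchSubj lp.c1 uctx t.s ∧ matchPred lp.c2 uctx t.p ∧ matchObj lp.c3 uctx t.o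

/-! ### Solution mappings -/

abbrev Mapping := Var → Option Obj

def mdom (μ : Mapping) : Set Var := {v | μ v ≠ none}

def emptyMap : Mapping := fun _ => none

def single (v : Var) (o : Obj) : Mapping := fun w => if w = v then some o else none

def compatible (μ1 μ2 : Mapping) : Prop :=
  ∀ v a b, μ1 v = some a → μ2 v = some b → a = b

def munion (μ1 μ2 : Mapping) : Mapping := fun v =>
  match μ1 v with
  | some a => some a
  | none => μ2 v

/-- Join of two sets of solution mappings. -/
def mjoin (Ω1 Ω2 : Set Mapping) : Set Mapping :=
  {μ | ∃ μ1 ∈ Ω1, ∃ μ2 ∈ Ω2, compatible μ1 μ2 ∧ μ = munion μ1 μ2}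

/-- Restriction of a mapping to a finite set of variables. -/
def restrictV (V : Finset Var) (μ : Mapping) : Mapping := fun v =>
  if v ∈ V then μ v else none

/-! ### SPARQL graph patterns -/

inductive PTerm where
  | var (v : Var)
  | term (o : Obj)
deriving DecidableEq

structure TriplePattern where
  sj : PTerm
  pr : PTerm
  ob : PTerm
deriving DecidableEq

def PTerm.varsOf : PTerm → Set Var
  | .var v => {v}
  | .term _ => ∅

def TriplePattern.varsOf (t : TriplePattern) : Set Var :=
  t.sj.varsOf ∪ t.pr.varsOf ∪ t.ob.varsOf

def pval (μ : Mapping) : PTerm → Option Obj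
  | .var v => μ v
  | .term o => some o

def objToSubj : Obj → Option Subj
  | .uri u => some (.uri u)
  | .bnode b => some (.bnode b)
  | .lit _ => none

def objToURI : Obj → Option URI
  | .uri u => some u
  | _ => none

/-- `tpInst μ tp = some t` iff `μ[tp] = t` (all variables of `tp` bound by `μ`
and the instantiation is a well-formed RDF triple). -/
def tpInst (μ : Mapping) (t : TriplePattern) : Option RDFTriple := do
  let s ← pval μ t.sj
  let s' ← objToSubj s
  let p ← pval μ t.pr
  let p' ← objToURI p
  let o ← pval μ t.ob
  return ⟨s', p', o⟩

/-- Filter conditions. -/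
inductive Cond where
  | eq (a b : PTerm)
  | neq (a b : PTerm)
  | and (c1 c2 : Cond)
  | or (c1 c2 : Cond)
  | not (c : Cond)

def condHolds (μ : Mapping) : Cond → Prop
  | .eq a b => ∃ x, pval μ a = some x ∧ pval μ b = some x
  | .neq a b => ∃ x y, pval μ a = some x ∧ pval μ b = some y ∧ x ≠ y
  | .and c1 c2 => condHolds μ c1 ∧ condHolds μ c2
  | .or c1 c2 => condHolds μ c1 ∨ condHolds μ c2
  | .not c => ¬ condHolds μ c

/-- SPARQL graph patterns, built from triple patterns with
AND, UNION, OPT, FILTER, GRAPH and BIND. -/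
inductive GP where
  | empty
  | tp (t : TriplePattern)
  | and (g1 g2 : GP)
  | union (g1 g2 : GP)
  | opt (g1 g2 : GP)
  | filter (g : GP) (c : Cond)
  | graphU (u : URI) (g : GP)
  | graphV (v : Var) (g : GP)
  | bind (g : GP) (o : Obj) (v : Var)

/-- An RDF dataset: a default graph together with named graphs. -/
structure RDFDataset where
  dflt : Set RDFTriple
  named : URI → Option (Set RDFTriple)

/-- Standard set-based SPARQL evaluation of a graph pattern over an RDF
dataset `D` with active graph `G`. -/
def evalGP (D : RDFDataset) : GP → Set RDFTriple → Set Mapping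
  | .empty, _ => {emptyMap}
  | .tp t, G => {μ | mdom μ = t.varsOf ∧ ∃ tr ∈ G, tpInst μ t = some tr}
  | .and g1 g2, G => mjoin (evalGP D g1 G) (evalGP D g2 G)
  | .union g1 g2, G => evalGP D g1 G ∪ evalGP D g2 G
  | .opt g1 g2, G =>
      mjoin (evalGP D g1 G) (evalGP D g2 G) ∪
        {μ | μ ∈ evalGP D g1 G ∧ ∀ μ2 ∈ evalGP D g2 G, ¬ compatible μ μ2}
  | .filter g c, G => {μ | μ ∈ evalGP D g G ∧ condHolds μ c}
  | .graphU u g, _ => {μ | ∃ G', D.named u = some G' ∧ μ ∈ evalGP D g G'}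
  | .graphV v g, _ =>
      {μ | ∃ u G', D.named u = some G' ∧ ∃ μ' ∈ evalGP D g G',
            compatible μ' (single v (.uri u)) ∧ μ = munion μ' (single v (.uri u))}
  | .bind g o v, G => {μ' | ∃ μ ∈ evalGP D g G, μ v = none ∧ μ' = munion μ (single v o)}

/-! ### LDQL syntax -/

mutual
/-- LDQL queries. -/
inductive LDQL where
  | base (l : LPE) (P : GP)
  | seedU (U0 : Finset URI) (q : LDQL)
  | seedV (v : Var) (q : LDQL)
  | qand (q1 q2 : LDQL)
  | qunion (q1 q2 : LDQL)
  | proj (V0 : Finset Var) (q : LDQL)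

/-- Link path expressions. -/
inductive LPE where
  | eps
  | pat (lp : LinkPattern)
  | seq (l1 l2 : LPE)
  | alt (l1 l2 : LPE)
  | star (l : LPE)
  | test (l : LPE)
  | sub (v : Var) (q : LDQL)
end

/-- `dataset_W(U0)`. -/
def datasetW (W : Web) (U0 : Set URI) : RDFDataset where
  dflt := {t | ∃ u ∈ U0, ∃ d, W.adoc u = some d ∧ t ∈ W.data d}
  named := fun u =>
    if u ∈ U0 then (W.adoc u).map (fun d => ((W.data d : Finset RDFTriple) : Set RDFTriple))
    else none

/-! ### LDQL semantics -/

mutual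
/-- The S-based evaluation `⟦q⟧_W^S` of an LDQL query. -/
def evalQ (W : Web) : LDQL → Set URI → Set Mapping
  | .base l P, S =>
      evalGP (datasetW W {u' | ∃ u ∈ S, u' ∈ evalL W l u}) P
        (datasetW W {u' | ∃ u ∈ S, u' ∈ evalL W l u}).dflt
  | .seedU U0 q, _ => evalQ W q ↑U0
  | .seedV v q, _ => ⋃ u : URI, mjoin (evalQ W q {u}) {single v (.uri u)}
  | .qand q1 q2, S => mjoin (evalQ W q1 S) (evalQ W q2 S)
  | .qunion q1 q2, S => evalQ W q1 S ∪ evalQ W q2 S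
  | .proj V0 q, S => (restrictV V0) '' (evalQ W q S)

/-- The `uctx`-based evaluation `⟦l⟧_W^uctx` of a link path expression. -/
def evalL (W : Web) : LPE → URI → Set URI
  | .eps, u => if (W.adoc u).isSome then {u} else ∅
  | .pat lp, u =>
      {u' | ∃ d, W.adoc u = some d ∧ ∃ t d', W.edge d t u' d' ∧ lpMatch lp u t u'}
  | .seq l1 l2, u => {u'' | ∃ u', u' ∈ evalL W l1 u ∧ u'' ∈ evalL W l2 u'}
  | .alt l1 l2, u => evalL W l1 u ∪ evalL W l2 u
  | .star l, u =>
      {u' | (W.adoc u).isSome ∧ Relation.ReflTransGen (fun a b => b ∈ evalL W l a) u u'}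
  | .test l, u => {u' | u' = u ∧ evalL W l u ≠ ∅}
  | .sub v q, u =>
      {u' | (W.adoc u).isSome ∧ ∃ μ ∈ evalQ W q {u}, μ v = some (.uri u')}
end

/-- Semantic equivalence of LDQL queries. -/
def equivQ (q q' : LDQL) : Prop :=
  ∀ (W : Web) (S : Set URI), S.Finite → evalQ W q S = evalQ W q' S


/-! ### LPEs built only from ε, ⟨?v,q⟩ and (·)* -/

mutual
/-- All LPEs occurring in the query consist only of `ε`, `⟨?v,q⟩` and `(·)*`. -/
def LDQL.simple : LDQL → Prop
  | .base l _ => l.simple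
  | .seedU _ q => q.simple
  | .seedV _ q => q.simple
  | .qand q1 q2 => q1.simple ∧ q2.simple
  | .qunion q1 q2 => q1.simple ∧ q2.simple
  | .proj _ q => q.simple

/-- The LPE consists only of `ε`, `⟨?v,q⟩` and `(·)*`. -/
def LPE.simple : LPE → Prop
  | .eps => True
  | .pat _ => False
  | .seq _ _ => False
  | .alt _ _ => False
  | .star l => l.simple
  | .test _ => False
  | .sub _ q => q.simple
end

/-! ### Property paths under context-based semantics -/

/-- Property path expressions. -/
inductive PP where
  | uri (p : URI)
  | neg (us : List URI)
  | seq (r1 r2 : PP)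
  | alt (r1 r2 : PP)
  | star (r : PP)

/-- Terms allowed in PP-patterns: URIs, literals and variables. -/
inductive PPTerm where
  | uri (u : URI)
  | lit (l : LitId)
  | var (v : Var)

/-- The context selector `C_W`. -/
def CW (W : Web) (a : Obj) : Set RDFTriple :=
  {t | ∃ u d, a = .uri u ∧ W.adoc u = some d ∧ t ∈ W.data d ∧ t.s = .uri u}

/-- The RDF terms occurring in triples of documents of `W`. -/
def termsW (W : Web) : Set Obj :=
  {a | ∃ d ∈ W.docs, ∃ t ∈ W.data d, a = t.s.toObj ∨ a = .uri t.p ∨ a = t.o}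

/-- The binary relation on RDF terms induced by a PP expression under
context-based semantics. -/
def ppRel (W : Web) : PP → Obj → Obj → Prop
  | .uri p, a, b => ∃ s, objToSubj a = some s ∧ (⟨s, p, b⟩ : RDFTriple) ∈ CW W a
  | .neg us, a, b => ∃ p, p ∉ us ∧ ∃ s, objToSubj a = some s ∧ (⟨s, p, b⟩ : RDFTriple) ∈ CW W a
  | .seq r1 r2, a, b => ∃ m, ppRel W r1 a m ∧ ppRel W r2 m b
  | .alt r1 r2, a, b => ppRel W r1 a b ∨ ppRel W r2 a b
  | .star r, a, b => (a = b ∧ a ∈ termsW W) ∨ Relation.TransGen (ppRel W r) a b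

def PPTerm.toPval (μ : Mapping) : PPTerm → Option Obj
  | .uri u => some (.uri u)
  | .lit l => some (.lit l)
  | .var v => μ v

def ppVars (α β : PPTerm) : Set Var := {v | α = .var v ∨ β = .var v}

/-- The context-based evaluation `⟦(α,r,β)⟧_ctxt^W` of a PP-pattern. -/
def ctxtEvalPat (W : Web) (α : PPTerm) (r : PP) (β : PPTerm) : Set Mapping :=
  {μ | mdom μ = ppVars α β ∧
    ∃ a b, α.toPval μ = some a ∧ β.toPval μ = some b ∧ ppRel W r a b}

/-- PP-based SPARQL queries. -/
inductive PPQ where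
  | pat (α : PPTerm) (r : PP) (β : PPTerm)
  | and (R1 R2 : PPQ)
  | union (R1 R2 : PPQ)
  | opt (R1 R2 : PPQ)
  | filter (R : PPQ) (c : Cond)

/-- The context-based evaluation `⟦R⟧_ctxt^W` of a PP-based SPARQL query. -/
def evalPPQ (W : Web) : PPQ → Set Mapping
  | .pat α r β => ctxtEvalPat W α r β
  | .and R1 R2 => mjoin (evalPPQ W R1) (evalPPQ W R2)
  | .union R1 R2 => evalPPQ W R1 ∪ evalPPQ W R2
  | .opt R1 R2 =>
      mjoin (evalPPQ W R1) (evalPPQ W R2) ∪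
        {μ | μ ∈ evalPPQ W R1 ∧ ∀ μ2 ∈ evalPPQ W R2, ¬ compatible μ μ2}
  | .filter R c => {μ | μ ∈ evalPPQ W R ∧ condHolds μ c}

/-! ### NautiLOD -/

/-- NautiLOD expressions (without action rules). -/
inductive NLOD where
  | fwd (p : URI)
  | bwd (p : URI)
  | any
  | seq (n1 n2 : NLOD)
  | alt (n1 n2 : NLOD)
  | star (n : NLOD)
  | ask (n : NLOD) (P : GP)

/-- Dataset used for evaluating an ASK pattern over the data of a single document. -/
def askDS (W : Web) (d : Doc) : RDFDataset :=
  ⟨((W.data d : Finset RDFTriple) : Set RDFTriple), fun _ => none⟩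

/-- NautiLOD semantics `⟦n⟧_W^u`. -/
def nlEval (W : Web) : NLOD → URI → Set URI
  | .fwd p, u => {u' | ∃ d, W.adoc u = some d ∧ (⟨.uri u, p, .uri u'⟩ : RDFTriple) ∈ W.data d}
  | .bwd p, u => {u' | ∃ d, W.adoc u = some d ∧ (⟨.uri u', p, .uri u⟩ : RDFTriple) ∈ W.data d}
  | .any, u => {u' | ∃ d q, W.adoc u = some d ∧ (⟨.uri u, q, .uri u'⟩ : RDFTriple) ∈ W.data d}
  | .seq n1 n2, u =>
      {u'' | ∃ u', u' ∈ nlEval W n1 u ∧ (W.adoc u').isSome ∧ u'' ∈ nlEval W n2 u'}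
  | .alt n1 n2, u => nlEval W n1 u ∪ nlEval W n2 u
  | .star n, u =>
      {u' | Relation.ReflTransGen (fun a b => (W.adoc a).isSome ∧ b ∈ nlEval W n a) u u'}
  | .ask n P, u =>
      {u' | u' ∈ nlEval W n u ∧
        ∃ d, W.adoc u' = some d ∧ evalGP (askDS W d) P ((W.data d : Finset RDFTriple) : Set RDFTriple) ≠ ∅}

/-! ### Variables occurring in patterns and NautiLOD expressions -/

def condHasVar (v : Var) : Cond → Prop
  | .eq a b => a = .var v ∨ b = .var v
  | .neq a b => a = .var v ∨ b = .var v
  | .and c1 c2 => condHasVar v c1 ∨ condHasVar v c2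
  | .or c1 c2 => condHasVar v c1 ∨ condHasVar v c2
  | .not c => condHasVar v c

/-- The variable `v` occurs in the SPARQL graph pattern. -/
def gpHasVar (v : Var) : GP → Prop
  | .empty => False
  | .tp t => t.sj = .var v ∨ t.pr = .var v ∨ t.ob = .var v
  | .and g1 g2 => gpHasVar v g1 ∨ gpHasVar v g2
  | .union g1 g2 => gpHasVar v g1 ∨ gpHasVar v g2
  | .opt g1 g2 => gpHasVar v g1 ∨ gpHasVar v g2
  | .filter g c => gpHasVar v g ∨ condHasVar v c
  | .graphU _ g => gpHasVar v g
  | .graphV w g => v = w ∨ gpHasVar v g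
  | .bind g _ w => v = w ∨ gpHasVar v g

/-- The variable `v` occurs in the NautiLOD expression. -/
def nlodHasVar (v : Var) : NLOD → Prop
  | .fwd _ => False
  | .bwd _ => False
  | .any => False
  | .seq n1 n2 => nlodHasVar v n1 ∨ nlodHasVar v n2
  | .alt n1 n2 => nlodHasVar v n1 ∨ nlodHasVar v n2
  | .star n => nlodHasVar v n
  | .ask n P => nlodHasVar v n ∨ gpHasVar v P

/-! ### Reachability-based query semantics -/

/-- A reachability criterion. -/
def ReachCrit := RDFTriple → URI → GP → Prop

def cAll : ReachCrit := fun _ _ _ => True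

def cNone : ReachCrit := fun _ _ _ => False

/-- The list of triple patterns occurring in a SPARQL graph pattern. -/
def GP.tps : GP → List TriplePattern
  | .empty => []
  | .tp t => [t]
  | .and g1 g2 => g1.tps ++ g2.tps
  | .union g1 g2 => g1.tps ++ g2.tps
  | .opt g1 g2 => g1.tps ++ g2.tps
  | .filter g _ => g.tps
  | .graphU _ g => g.tps
  | .graphV _ g => g.tps
  | .bind g _ _ => g.tps

def cMatch : ReachCrit := fun t _ P => ∃ (μ : Mapping) (tp : TriplePattern),
  tp ∈ P.tps ∧ tpInst μ tp = some t

/-- `(c,S,P)`-reachability of a document in `W`. -/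
inductive Reachable (W : Web) (c : ReachCrit) (S : Set URI) (P : GP) : Doc → Prop where
  | seed (u : URI) (d : Doc) : u ∈ S → W.adoc u = some d → Reachable W c S P d
  | step (dsrc : Doc) (t : RDFTriple) (u : URI) (d : Doc) :
      Reachable W c S P dsrc → W.edge dsrc t u d → c t u P → Reachable W c S P d

/-- The RDF graph consisting of all triples of all `(c,S,P)`-reachable documents. -/
def reachGraph (W : Web) (c : ReachCrit) (S : Set URI) (P : GP) : Set RDFTriple :=
  {t | ∃ d, Reachable W c S P d ∧ t ∈ W.data d}

/-- The S-based evaluation of `P` over `W` under `c`-semantics. -/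
def reachEval (W : Web) (c : ReachCrit) (S : Set URI) (P : GP) : Set Mapping :=
  evalGP ⟨reachGraph W c S P, fun _ => none⟩ P (reachGraph W c S P)

/-! ### Constructions used in Theorems on c_Match and NautiLOD -/

def addFilter (v : Var) (pt : PTerm) (g : GP) : GP :=
  match pt with
  | .var _ => g
  | .term o => .filter g (.eq (.var v) (.term o))

/-- The basic LDQL query `q_k = ⟨ε,P_k⟩` associated with a triple pattern. -/
def matchQ (vs vp vo : Var) (t : TriplePattern) : LDQL :=
  .base .eps (addFilter vo t.ob (addFilter vp t.pr (addFilter vs t.sj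
    (.tp ⟨.var vs, .var vp, .var vo⟩))))

/-- An LPE whose evaluation is empty everywhere. -/
def emptyLPE (v : Var) : LPE := .sub v (.base .eps .empty)

/-- The LPE `l_Match` associated with a SPARQL graph pattern. -/
def lMatch (vs vp vo : Var) (P : GP) : LPE :=
  .star ((P.tps.map (fun t =>
      LPE.alt (.sub vs (matchQ vs vp vo t))
        (LPE.alt (.sub vp (matchQ vs vp vo t)) (.sub vo (matchQ vs vp vo t))))).foldr
    LPE.alt (emptyLPE vs))

/-- The translation `trans_N` from NautiLOD expressions to LPEs, using the
(fresh, pairwise distinct) variables `vx`, `vu`, `vp`. -/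
def transN (vx vu vp : Var) : NLOD → LPE
  | .fwd p => .pat ⟨.plus, .uri p, .star⟩
  | .bwd p => .pat ⟨.star, .uri p, .plus⟩
  | .any => .sub vx (.base .eps (.graphV vu (.tp ⟨.var vu, .var vp, .var vx⟩)))
  | .seq n1 n2 => .seq (transN vx vu vp n1) (transN vx vu vp n2)
  | .alt n1 n2 => .alt (transN vx vu vp n1) (transN vx vu vp n2)
  | .star n => .star (transN vx vu vp n)
  | .ask n P => .seq (transN vx vu vp n) (.test (.sub vx (.base .eps (.graphV vx P))))

/-!
Every LPE `l` is replaced by a simple LPE computing `⟦l⟧ ∩ adom W`, the URIs of `⟦l⟧` that have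
a document. Nothing is lost inside `⟨l, P⟩`, because `datasetW` ignores URIs without a document,
and `⟨?0, ⟨A, GRAPH ?0 {}⟩⟩` enumerates exactly `⟦A⟧ ∩ adom W`; with this, `l₁/l₂`, `l₁|l₂` and
link patterns are simulated by `SEED ?v`, `UNION` and a SPARQL pattern over the context document,
and `l*` is simulated by `(·)*` because every step of a path starts in `adom W`.
A test `[l]` needs the nonemptiness of `⟦l⟧` itself, which may consist of URIs without a document.
It is decided by a Boolean query (solutions `{∅}` or `∅`) built in the same mutual recursion; for
`⟨?v, q⟩` it joins the solutions of `q` that bind `?v` with `SEED ?v`.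
-/

def adom (W : Web) : Set URI := {u | (W.adoc u).isSome}

theorem evalL_eq_empty_of_notMem_adom (W : Web) {u : URI} (hu : u ∉ adom W) (l : LPE) :
    evalL W l u = ∅ := by
  have hu' : W.adoc u = none := Option.not_isSome_iff_eq_none.mp hu
  match l with
  | .eps => simp [evalL, hu']
  | .pat _ => simp [evalL, hu']
  | .seq l1 _ => simp [evalL, evalL_eq_empty_of_notMem_adom W hu l1]
  | .alt l1 l2 =>
      simp [evalL, evalL_eq_empty_of_notMem_adom W hu l1, evalL_eq_empty_of_notMem_adom W hu l2]
  | .star _ => simp [evalL, hu']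
  | .test l' => simp [evalL, evalL_eq_empty_of_notMem_adom W hu l']
  | .sub _ _ => simp [evalL, hu']

theorem mem_adom_of_mem_evalL {W : Web} {l : LPE} {u x : URI} (h : x ∈ evalL W l u) :
    u ∈ adom W := by
  by_contra hu
  simp [evalL_eq_empty_of_notMem_adom W hu] at h

theorem evalL_eps (W : Web) (u : URI) : evalL W .eps u = {x | x = u ∧ u ∈ adom W} := by
  ext x
  by_cases hu : u ∈ adom W
  · simp_all [evalL, adom]
  · simp [evalL_eq_empty_of_notMem_adom W hu, hu]

theorem evalL_nonempty_eps_iff (W : Web) (u : URI) :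
    (evalL W .eps u).Nonempty ↔ u ∈ adom W := by
  rw [evalL_eps]
  exact ⟨fun ⟨_, _, hu⟩ => hu, fun hu => ⟨u, rfl, hu⟩⟩

theorem evalL_nonempty_star_iff (W : Web) (l : LPE) (u : URI) :
    (evalL W (.star l) u).Nonempty ↔ u ∈ adom W := by
  rw [evalL]
  exact ⟨fun ⟨_, hu, _⟩ => hu, fun hu => ⟨u, hu, .refl⟩⟩

theorem evalL_pat_subset_adom (W : Web) (lp : LinkPattern) (u : URI) :
    evalL W (.pat lp) u ⊆ adom W := by
  rintro x ⟨-, -, -, d', ⟨-, -, -, hd'⟩, -⟩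
  simp [adom, hd']

theorem evalL_sub (W : Web) (v : Var) (Q : LDQL) (u : URI) :
    evalL W (.sub v Q) u =
      {x | u ∈ adom W ∧ ∃ μ ∈ evalQ W Q {u}, μ v = some (.uri x)} := by
  rw [evalL]; rfl

theorem evalQ_base_singleton (W : Web) (l : LPE) (P : GP) (u : URI) :
    evalQ W (.base l P) {u} =
      evalGP (datasetW W (evalL W l u)) P (datasetW W (evalL W l u)).dflt := by
  simp [evalQ]

theorem datasetW_inter_adom (W : Web) (U0 : Set URI) :
    datasetW W (U0 ∩ adom W) = datasetW W U0 := by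
  simp only [datasetW, RDFDataset.mk.injEq]
  constructor
  · ext t
    simp only [Set.mem_ofPred_eq, Set.mem_inter_iff]
    exact ⟨fun ⟨u, hu, hd⟩ => ⟨u, hu.1, hd⟩,
      fun ⟨u, hu, d, hd, ht⟩ => ⟨u, ⟨hu, by simp [adom, hd]⟩, d, hd, ht⟩⟩
  · funext u
    by_cases hU : u ∈ U0 <;> cases h : W.adoc u <;> simp [adom, hU, h]

/-! ### Solution mappings -/

@[simp] theorem single_apply_self (v : Var) (o : Obj) : single v o v = some o := by
  simp [single]

theorem single_apply_of_ne {v w : Var} (o : Obj) (h : w ≠ v) : single v o w = none := by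
  simp [single, h]

@[simp] theorem munion_emptyMap_left (μ : Mapping) : munion emptyMap μ = μ := rfl

@[simp] theorem compatible_emptyMap_left (μ : Mapping) : compatible emptyMap μ := by
  intro v a b h; simp [emptyMap] at h

theorem munion_emptyMap_right (μ : Mapping) : munion μ emptyMap = μ := by
  funext v; unfold munion; cases μ v <;> rfl

theorem compatible_emptyMap_right (μ : Mapping) : compatible μ emptyMap := by
  intro v a b _ h; simp [emptyMap] at h

theorem munion_apply_of_eq_none {μ1 : Mapping} {v : Var} (h : μ1 v = none) (μ2 : Mapping) :
    munion μ1 μ2 v = μ2 v := by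
  simp [munion, h]

theorem munion_apply_of_eq_some {μ1 : Mapping} {v : Var} {o : Obj} (h : μ1 v = some o)
    (μ2 : Mapping) : munion μ1 μ2 v = some o := by
  simp [munion, h]

theorem munion_ne_none_iff (μ1 μ2 : Mapping) (v : Var) :
    munion μ1 μ2 v ≠ none ↔ μ1 v ≠ none ∨ μ2 v ≠ none := by
  unfold munion; cases μ1 v <;> simp

theorem compatible_comm (μ1 μ2 : Mapping) : compatible μ1 μ2 ↔ compatible μ2 μ1 :=
  ⟨fun h v a b ha hb => (h v b a hb ha).symm, fun h v a b ha hb => (h v b a hb ha).symm⟩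

theorem compatible_single_single {v w : Var} (h : v ≠ w) (a b : Obj) :
    compatible (single v a) (single w b) := by
  intro x p q hp hq
  simp only [single] at hp hq
  split_ifs at hp hq with h1 h2
  exact absurd (h1.symm.trans h2) h

def uriSol (v : Var) (x : URI) : Mapping := single v (.uri x)

@[simp] theorem uriSol_apply_self (v : Var) (x : URI) : uriSol v x v = some (.uri x) :=
  single_apply_self _ _

theorem uriSol_apply_of_ne {v w : Var} (x : URI) (h : w ≠ v) : uriSol v x w = none :=
  single_apply_of_ne _ h

theorem compatible_uriSol_left_iff {v : Var} {x : URI} {μ : Mapping} :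
    compatible (uriSol v x) μ ↔ μ v = none ∨ μ v = some (.uri x) := by
  constructor
  · intro h
    cases hμ : μ v with
    | none => exact Or.inl rfl
    | some o => exact Or.inr (congrArg some (h v _ _ (uriSol_apply_self v x) hμ).symm)
  · rintro (h | h) w a b ha hb
    all_goals
      by_cases hw : w = v
      · subst hw; simp_all
      · simp [uriSol_apply_of_ne x hw] at ha

theorem munion_self (μ : Mapping) : munion μ μ = μ := by
  funext v; unfold munion; cases μ v <;> rfl

theorem mjoin_image_uriSol (v : Var) (X Y : Set URI) :
    mjoin (uriSol v '' X) (uriSol v '' Y) = uriSol v '' (X ∩ Y) := by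
  ext μ
  simp only [mjoin, Set.mem_image, Set.mem_ofPred_eq, Set.mem_inter_iff]
  constructor
  · rintro ⟨_, ⟨x, hx, rfl⟩, _, ⟨y, hy, rfl⟩, hc, rfl⟩
    obtain rfl : y = x := by simpa using compatible_uriSol_left_iff.mp hc
    exact ⟨y, ⟨hx, hy⟩, (munion_self _).symm⟩
  · rintro ⟨x, ⟨hx, hy⟩, rfl⟩
    exact ⟨_, ⟨x, hx, rfl⟩, _, ⟨x, hy, rfl⟩, compatible_uriSol_left_iff.mpr (by simp),
      (munion_self _).symm⟩

theorem exists_mem_image_uriSol_iff {v : Var} {X : Set URI} {y : URI} :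
    (∃ μ ∈ uriSol v '' X, μ v = some (.uri y)) ↔ y ∈ X := by
  simp [uriSol]

def boolSols (p : Prop) : Set Mapping := {μ | p ∧ μ = emptyMap}

theorem mjoin_boolSols_right (Ω : Set Mapping) (p : Prop) :
    mjoin Ω (boolSols p) = {μ ∈ Ω | p} := by
  ext μ; simp [mjoin, boolSols, and_comm, munion_emptyMap_right, compatible_emptyMap_right]

theorem boolSols_union (p q : Prop) : boolSols p ∪ boolSols q = boolSols (p ∨ q) := by
  ext μ; simp only [boolSols, Set.mem_union, Set.mem_ofPred_eq]; tauto

theorem image_restrictV_empty (Ω : Set Mapping) : restrictV ∅ '' Ω = boolSols Ω.Nonempty := by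
  have h : ∀ μ, restrictV ∅ μ = emptyMap := fun μ => by funext v; simp [restrictV, emptyMap]
  ext μ
  simp only [Set.mem_image, h, boolSols, Set.mem_ofPred_eq]
  exact ⟨fun ⟨μ', hμ', he⟩ => ⟨⟨μ', hμ'⟩, he.symm⟩, fun ⟨⟨μ', hμ'⟩, he⟩ => ⟨μ', hμ', he.symm⟩⟩

/-! ### Gadgets built from simple LPEs -/

theorem evalGP_graphV_empty (W : Web) (U0 : Set URI) (v : Var) (G : Set RDFTriple) :
    evalGP (datasetW W U0) (.graphV v .empty) G = uriSol v '' (U0 ∩ adom W) := by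
  ext μ
  simp only [evalGP, Set.mem_singleton_iff, exists_eq_left, compatible_emptyMap_left,
    munion_emptyMap_left, true_and, datasetW, Set.mem_image, Set.mem_inter_iff, uriSol]
  constructor
  · rintro ⟨u, G', hG', rfl⟩
    refine ⟨u, ⟨?_, ?_⟩, rfl⟩ <;> by_cases hU : u ∈ U0 <;> cases h : W.adoc u <;>
      simp_all [adom]
  · rintro ⟨u, ⟨hU, hu⟩, rfl⟩
    obtain ⟨d, hd⟩ := Option.isSome_iff_exists.mp hu
    exact ⟨u, ((W.data d : Finset RDFTriple) : Set RDFTriple), by simp [hU, hd], rfl⟩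

def valuesQ (v : Var) (A : LPE) : LDQL := .base A (.graphV v .empty)

theorem evalQ_valuesQ (W : Web) (v : Var) (A : LPE) (u : URI) :
    evalQ W (valuesQ v A) {u} = uriSol v '' (evalL W A u ∩ adom W) := by
  rw [valuesQ, evalQ_base_singleton, evalGP_graphV_empty]

theorem evalL_sub_of_evalQ_eq_image {W : Web} {v : Var} {Q : LDQL} {u : URI} {X : Set URI}
    (hQ : evalQ W Q {u} = uriSol v '' X) (hX : ∀ x ∈ X, u ∈ adom W) :
    evalL W (.sub v Q) u = X := by
  ext x
  rw [evalL_sub, Set.mem_ofPred_eq, hQ, exists_mem_image_uriSol_iff]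
  exact ⟨And.right, fun hx => ⟨hX x hx, hx⟩⟩

def restrictL (A : LPE) : LPE := .sub 0 (valuesQ 0 A)

theorem evalL_restrictL (W : Web) (A : LPE) (u : URI) :
    evalL W (restrictL A) u = evalL W A u ∩ adom W :=
  evalL_sub_of_evalQ_eq_image (evalQ_valuesQ W 0 A u) fun _ hx => mem_adom_of_mem_evalL hx.1

def unionL (A B : LPE) : LPE := .sub 0 (.qunion (valuesQ 0 A) (valuesQ 0 B))

theorem evalL_unionL (W : Web) (A B : LPE) (u : URI) :
    evalL W (unionL A B) u = (evalL W A u ∪ evalL W B u) ∩ adom W := by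
  refine evalL_sub_of_evalQ_eq_image ?_ fun _ hx => ?_
  · rw [evalQ, evalQ_valuesQ, evalQ_valuesQ, ← Set.image_union, Set.union_inter_distrib_right]
  · rcases hx.1 with h | h <;> exact mem_adom_of_mem_evalL h

def concatL (A B : LPE) : LPE := .sub 0 (.qand (valuesQ 1 A) (.seedV 1 (valuesQ 0 B)))

theorem evalL_concatL (W : Web) (A B : LPE) (u : URI) :
    evalL W (concatL A B) u = {y | ∃ x ∈ evalL W A u ∩ adom W, y ∈ evalL W B x ∩ adom W} := by
  have h01 : (0 : Var) ≠ 1 := by decide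
  ext y
  simp only [concatL, evalL_sub, evalQ, evalQ_valuesQ, Set.mem_ofPred_eq]
  constructor
  · rintro ⟨-, _, ⟨_, ⟨x, hx, rfl⟩, μ2, hμ2, hc, rfl⟩, hy⟩
    obtain ⟨x', _, ⟨y', hy', rfl⟩, _, rfl, -, rfl⟩ := Set.mem_iUnion.mp hμ2
    obtain rfl : x' = x := by
      simpa [munion_apply_of_eq_none (uriSol_apply_of_ne _ h01.symm)] using
        compatible_uriSol_left_iff.mp hc
    rw [munion_apply_of_eq_none (uriSol_apply_of_ne _ h01),
      munion_apply_of_eq_some (uriSol_apply_self _ _)] at hy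
    obtain rfl : y' = y := Obj.uri.inj (Option.some.inj hy)
    exact ⟨x', hx, hy'⟩
  · rintro ⟨x, hx, hy⟩
    refine ⟨mem_adom_of_mem_evalL hx.1, _, ⟨_, ⟨x, hx, rfl⟩, _,
      Set.mem_iUnion.mpr ⟨x, _, ⟨y, hy, rfl⟩, _, rfl, compatible_single_single h01 _ _, rfl⟩,
      ?_, rfl⟩, ?_⟩
    · exact compatible_uriSol_left_iff.mpr
        (Or.inr (by simp [munion_apply_of_eq_none (uriSol_apply_of_ne _ h01.symm), single]))
    · rw [munion_apply_of_eq_none (uriSol_apply_of_ne _ h01),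
        munion_apply_of_eq_some (uriSol_apply_self _ _)]

def hitsAdomQ (A : LPE) : LDQL := .proj ∅ (valuesQ 0 A)

theorem evalQ_hitsAdomQ (W : Web) (A : LPE) (u : URI) :
    evalQ W (hitsAdomQ A) {u} = boolSols (evalL W A u ∩ adom W).Nonempty := by
  rw [hitsAdomQ, evalQ, image_restrictV_empty, evalQ_valuesQ, Set.image_nonempty]

def guardL (Q : LDQL) : LPE := .sub 0 (.qand (valuesQ 0 .eps) Q)

theorem evalL_guardL {W : Web} {Q : LDQL} {u : URI} {p : Prop}
    (hQ : evalQ W Q {u} = boolSols p) :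
    evalL W (guardL Q) u = {x | x = u ∧ u ∈ adom W ∧ p} := by
  refine evalL_sub_of_evalQ_eq_image ?_ fun _ hx => hx.2.1
  rw [evalQ, hQ, mjoin_boolSols_right, evalQ_valuesQ, evalL_eps]
  ext μ
  simp only [Set.mem_ofPred_eq, Set.mem_image, Set.mem_inter_iff]
  constructor
  · rintro ⟨⟨x, ⟨⟨rfl, hx⟩, -⟩, rfl⟩, hp⟩
    exact ⟨x, ⟨rfl, hx, hp⟩, rfl⟩
  · rintro ⟨x, ⟨rfl, hx, hp⟩, rfl⟩
    exact ⟨⟨x, ⟨⟨rfl, hx⟩, hx⟩, rfl⟩, hp⟩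

theorem evalQ_seedV_of_boolSols {W : Web} {Q : LDQL} {p : URI → Prop}
    (hQ : ∀ a, evalQ W Q {a} = boolSols (p a)) (v : Var) (S : Set URI) :
    evalQ W (.seedV v Q) S = uriSol v '' {a | p a} := by
  ext μ
  simp [evalQ, hQ, mjoin, boolSols, uriSol, eq_comm]

def existsQ (A : LPE) (Q : LDQL) : LDQL := .proj ∅ (.qand (valuesQ 0 A) (.seedV 0 Q))

theorem evalQ_existsQ {W : Web} {A : LPE} {Q : LDQL} {p : URI → Prop}
    (hQ : ∀ a, evalQ W Q {a} = boolSols (p a)) (u : URI) :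
    evalQ W (existsQ A Q) {u} = boolSols (∃ a ∈ evalL W A u ∩ adom W, p a) := by
  rw [existsQ, evalQ, evalQ, evalQ_valuesQ, evalQ_seedV_of_boolSols hQ, mjoin_image_uriSol,
    image_restrictV_empty, Set.image_nonempty]
  rfl

/-! ### Link patterns -/

theorem Subj.toObj_eq_uri_iff {s : Subj} {w : URI} : s.toObj = .uri w ↔ s = .uri w := by
  cases s <;> simp [Subj.toObj]

theorem objToSubj_eq_some_iff {o : Obj} {s : Subj} : objToSubj o = some s ↔ o = s.toObj := by
  cases o <;> cases s <;> simp [objToSubj, Subj.toObj]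

theorem objToURI_eq_some_iff {o : Obj} {p : URI} : objToURI o = some p ↔ o = .uri p := by
  cases o <;> simp [objToURI]

theorem tpInst_vars_eq_some_iff (μ : Mapping) (a b c : Var) (t : RDFTriple) :
    tpInst μ ⟨.var a, .var b, .var c⟩ = some t ↔
      μ a = some t.s.toObj ∧ μ b = some (.uri t.p) ∧ μ c = some t.o := by
  constructor
  · intro h
    simp only [tpInst, pval, Option.bind_eq_bind, Option.bind_eq_some_iff,
      Option.pure_def, Option.some.injEq] at h
    obtain ⟨s, ha, s', hs, p, hb, p', hp, o, hc, rfl⟩ := h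
    rw [objToSubj_eq_some_iff] at hs
    rw [objToURI_eq_some_iff] at hp
    subst hs hp
    exact ⟨ha, hb, hc⟩
  · rintro ⟨ha, hb, hc⟩
    obtain ⟨s, p, o⟩ := t
    have hs : objToSubj s.toObj = some s := objToSubj_eq_some_iff.mpr rfl
    simp [tpInst, pval, ha, hb, hc, hs, objToURI]

def tripleSol (t : RDFTriple) : Mapping
  | 1 => some t.s.toObj
  | 2 => some (.uri t.p)
  | 3 => some t.o
  | _ => none

theorem evalGP_tp_123 (D : RDFDataset) (G : Set RDFTriple) :
    evalGP D (.tp ⟨.var 1, .var 2, .var 3⟩) G = tripleSol '' G := by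
  ext μ
  simp only [evalGP, tpInst_vars_eq_some_iff, Set.mem_ofPred_eq, Set.mem_image]
  constructor
  · rintro ⟨hdom, t, ht, h1, h2, h3⟩
    refine ⟨t, ht, funext fun x => ?_⟩
    have hx : x ∉ ({1, 2, 3} : Set Var) → μ x = none := fun hx => by
      have : x ∉ mdom μ := by
        simp only [hdom, TriplePattern.varsOf, PTerm.varsOf, Set.mem_union,
          Set.mem_singleton_iff]
        simpa [or_assoc] using hx
      simpa [mdom] using this
    rcases x with _ | _ | _ | _ | x
    · simp [hx, tripleSol]
    · exact h1.symm
    · exact h2.symm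
    · exact h3.symm
    · simp [hx, tripleSol]
  · rintro ⟨t, ht, rfl⟩
    refine ⟨Set.ext fun x => ?_, t, ht, rfl, rfl, rfl⟩
    rcases x with _ | _ | _ | _ | x <;> simp [mdom, TriplePattern.varsOf, PTerm.varsOf, tripleSol]

def linkSol (u : URI) (t : RDFTriple) : Mapping := munion (uriSol 4 u) (tripleSol t)

@[simp] theorem linkSol_one (u : URI) (t : RDFTriple) : linkSol u t 1 = some t.s.toObj := rfl
@[simp] theorem linkSol_two (u : URI) (t : RDFTriple) : linkSol u t 2 = some (.uri t.p) := rfl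
@[simp] theorem linkSol_three (u : URI) (t : RDFTriple) : linkSol u t 3 = some t.o := rfl
@[simp] theorem linkSol_four (u : URI) (t : RDFTriple) : linkSol u t 4 = some (.uri u) := rfl

/-- `?4` holds the context URI, to which `+` components refer. -/
def condU (c : LPUP) (b : Var) : Cond :=
  match c with
  | .uri w => .eq (.var b) (.term (.uri w))
  | .star => .eq (.term (.uri 0)) (.term (.uri 0))
  | .plus => .eq (.var b) (.var 4)

def condO (c : LPULP) (b : Var) : Cond :=
  match c with
  | .uri w => .eq (.var b) (.term (.uri w))
  | .lit l => .eq (.var b) (.term (.lit l))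
  | .star => .eq (.term (.uri 0)) (.term (.uri 0))
  | .plus => .eq (.var b) (.var 4)

theorem condHolds_condU_one (c : LPUP) (u : URI) (t : RDFTriple) :
    condHolds (linkSol u t) (condU c 1) ↔ matchSubj c u t.s := by
  obtain ⟨s, p, o⟩ := t
  cases c <;> cases s <;> simp [condU, condHolds, pval, matchSubj, Subj.toObj, eq_comm]

theorem condHolds_condU_two (c : LPUP) (u : URI) (t : RDFTriple) :
    condHolds (linkSol u t) (condU c 2) ↔ matchPred c u t.p := by
  cases c <;> simp [condU, condHolds, pval, matchPred, eq_comm]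

theorem condHolds_condO_three (c : LPULP) (u : URI) (t : RDFTriple) :
    condHolds (linkSol u t) (condO c 3) ↔ matchObj c u t.o := by
  cases c <;> simp [condO, condHolds, pval, matchObj, eq_comm]

def linkGP (lp : LinkPattern) : GP :=
  .filter (.filter (.filter (.and (.graphV 4 .empty) (.tp ⟨.var 1, .var 2, .var 3⟩))
    (condU lp.c1 1)) (condU lp.c2 2)) (condO lp.c3 3)

theorem evalGP_linkGP (W : Web) (lp : LinkPattern) {u : URI} {d : Doc}
    (hd : W.adoc u = some d) :
    evalGP (datasetW W {u}) (linkGP lp) (datasetW W {u}).dflt =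
      linkSol u '' {t | t ∈ W.data d ∧
        matchSubj lp.c1 u t.s ∧ matchPred lp.c2 u t.p ∧ matchObj lp.c3 u t.o} := by
  have hdflt : (datasetW W {u}).dflt = ((W.data d : Finset RDFTriple) : Set RDFTriple) := by
    ext t; simp [datasetW, hd]
  have hu : ({u} : Set URI) ∩ adom W = {u} := by simp [adom, hd]
  have hcomp : ∀ t, compatible (uriSol 4 u) (tripleSol t) := fun t =>
    compatible_uriSol_left_iff.mpr (Or.inl rfl)
  have hand : evalGP (datasetW W {u}) (.and (.graphV 4 .empty) (.tp ⟨.var 1, .var 2, .var 3⟩))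
      (datasetW W {u}).dflt = linkSol u '' (W.data d : Set RDFTriple) := by
    rw [evalGP, evalGP_graphV_empty, evalGP_tp_123, hu, hdflt]
    ext μ
    simp only [mjoin, Set.image_singleton, Set.mem_singleton_iff, Set.mem_image,
      Set.mem_ofPred_eq, exists_eq_left, linkSol]
    constructor
    · rintro ⟨_, ⟨t, ht, rfl⟩, -, rfl⟩; exact ⟨t, ht, rfl⟩
    · rintro ⟨t, ht, rfl⟩; exact ⟨_, ⟨t, ht, rfl⟩, hcomp t, rfl⟩
  simp only [linkGP, evalGP] at hand ⊢
  rw [hand]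
  ext μ
  simp only [Set.mem_ofPred_eq, Set.mem_image, Finset.mem_coe]
  constructor
  · rintro ⟨⟨⟨⟨t, ht, rfl⟩, h1⟩, h2⟩, h3⟩
    exact ⟨t, ⟨ht, (condHolds_condU_one _ _ _).mp h1, (condHolds_condU_two _ _ _).mp h2,
      (condHolds_condO_three _ _ _).mp h3⟩, rfl⟩
  · rintro ⟨t, ⟨ht, h1, h2, h3⟩, rfl⟩
    exact ⟨⟨⟨⟨t, ht, rfl⟩, (condHolds_condU_one _ _ _).mpr h1⟩,
      (condHolds_condU_two _ _ _).mpr h2⟩, (condHolds_condO_three _ _ _).mpr h3⟩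

def linkBranchL (lp : LinkPattern) (isStar : Prop) [Decidable isStar] (v : Var) : LPE :=
  if isStar then .sub v (.base .eps (linkGP lp)) else emptyLPE v

theorem evalL_linkBranchL (W : Web) (lp : LinkPattern) (isStar : Prop) [Decidable isStar]
    (v : Var) {u : URI} {d : Doc} (hd : W.adoc u = some d) :
    evalL W (linkBranchL lp isStar v) u =
      {x | isStar ∧ ∃ t ∈ W.data d, linkSol u t v = some (.uri x) ∧
        matchSubj lp.c1 u t.s ∧ matchPred lp.c2 u t.p ∧ matchObj lp.c3 u t.o} := by
  have hu : u ∈ adom W := by simp [adom, hd]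
  unfold linkBranchL
  split_ifs with h
  · rw [evalL_sub, evalQ_base_singleton, evalL_eps]
    have : {x | x = u ∧ u ∈ adom W} = {u} := by simp [hu]
    rw [this, evalGP_linkGP W lp hd]
    ext x
    simp only [hu, h, Set.mem_ofPred_eq, Set.mem_image, true_and]
    exact ⟨fun ⟨_, ⟨t, ⟨ht, hm⟩, rfl⟩, hv⟩ => ⟨t, ht, hv, hm⟩,
      fun ⟨t, ht, hv, hm⟩ => ⟨_, ⟨t, ⟨ht, hm⟩, rfl⟩, hv⟩⟩
  · ext x
    simp [emptyLPE, evalL_sub, evalQ_base_singleton, evalGP, emptyMap, h]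

def linkPatternL (lp : LinkPattern) : LPE :=
  unionL (linkBranchL lp (lp.c1 = .star) 1)
    (unionL (linkBranchL lp (lp.c2 = .star) 2) (linkBranchL lp (lp.c3 = .star) 3))

theorem evalL_pat (W : Web) (lp : LinkPattern) {u : URI} {d : Doc} (hd : W.adoc u = some d) :
    evalL W (.pat lp) u = {x | x ∈ adom W ∧ ∃ t ∈ W.data d, lpMatch lp u t x} := by
  ext x
  rw [evalL]
  constructor
  · rintro ⟨d0, hd0, t, d', ⟨-, ht, -, hx⟩, hm⟩
    obtain rfl : d0 = d := Option.some.inj (hd0.symm.trans hd)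
    exact ⟨by simp [adom, hx], t, ht, hm⟩
  · rintro ⟨hx, t, ht, hm⟩
    obtain ⟨d', hd'⟩ := Option.isSome_iff_exists.mp hx
    refine ⟨d, hd, t, d', ⟨W.adoc_mem u d hd, ht, ?_, hd'⟩, hm⟩
    rcases hm.1 with ⟨-, h⟩ | ⟨-, h⟩ | ⟨-, h⟩ <;> simp [urisOf, h]

theorem evalL_linkPatternL (W : Web) (lp : LinkPattern) (u : URI) :
    evalL W (linkPatternL lp) u = evalL W (.pat lp) u := by
  cases hd : W.adoc u with
  | none =>
    have hu : u ∉ adom W := by simp [adom, hd]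
    simp only [evalL_eq_empty_of_notMem_adom W hu]
  | some d =>
    rw [linkPatternL, evalL_unionL, evalL_unionL, evalL_linkBranchL W lp _ 1 hd,
      evalL_linkBranchL W lp _ 2 hd, evalL_linkBranchL W lp _ 3 hd, evalL_pat W lp hd]
    ext x
    simp only [lpMatch, Set.mem_inter_iff, Set.mem_union, Set.mem_ofPred_eq, linkSol_one,
      linkSol_two, linkSol_three, Option.some.injEq, Subj.toObj_eq_uri_iff, Obj.uri.injEq]
    constructor
    · rintro ⟨⟨hc, t, ht, hx, hm⟩ | ⟨⟨hc, t, ht, hx, hm⟩ | ⟨hc, t, ht, hx, hm⟩, -⟩, ha⟩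
      exacts [⟨ha, t, ht, Or.inl ⟨hc, hx⟩, hm⟩, ⟨ha, t, ht, Or.inr (Or.inl ⟨hc, hx⟩), hm⟩,
        ⟨ha, t, ht, Or.inr (Or.inr ⟨hc, hx⟩), hm⟩]
    · rintro ⟨ha, t, ht, ⟨hc, hx⟩ | ⟨hc, hx⟩ | ⟨hc, hx⟩, hm⟩
      exacts [⟨Or.inl ⟨hc, t, ht, hx, hm⟩, ha⟩, ⟨Or.inr ⟨Or.inl ⟨hc, t, ht, hx, hm⟩, ha⟩, ha⟩,
        ⟨Or.inr ⟨Or.inr ⟨hc, t, ht, hx, hm⟩, ha⟩, ha⟩]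

/-! ### Restricting a query to the solutions binding a variable -/

def qFalse : LDQL := .base .eps (.filter .empty (.neq (.term (.uri 0)) (.term (.uri 0))))

@[simp] theorem evalQ_qFalse (W : Web) (S : Set URI) : evalQ W qFalse S = ∅ := by
  ext μ; simp [qFalse, evalQ, evalGP, condHolds, pval]

def qTrue : LDQL := .base .eps .empty

theorem evalQ_qTrue (W : Web) (a : URI) : evalQ W qTrue {a} = boolSols True := by
  ext μ; simp [qTrue, evalQ, evalGP, boolSols]

def boundQ (v : Var) : LDQL → LDQL
  | .base l P => .base l (.filter P (.eq (.var v) (.var v)))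
  | .seedU U0 q => .seedU U0 (boundQ v q)
  | .seedV w q => if w = v then .seedV w q else .seedV w (boundQ v q)
  | .qand q1 q2 => .qunion (.qand (boundQ v q1) q2) (.qand q1 (boundQ v q2))
  | .qunion q1 q2 => .qunion (boundQ v q1) (boundQ v q2)
  | .proj V0 q => if v ∈ V0 then .proj V0 (boundQ v q) else qFalse

theorem ne_none_of_mem_evalQ_seedV {W : Web} {w : Var} {q : LDQL} {S : Set URI} {μ : Mapping}
    (hμ : μ ∈ evalQ W (.seedV w q) S) : μ w ≠ none := by
  simp only [evalQ, Set.mem_iUnion] at hμ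
  obtain ⟨u, μ1, -, _, rfl, -, rfl⟩ := hμ
  simp [munion_ne_none_iff]

theorem sep_mjoin_bound (Ω1 Ω2 : Set Mapping) (v : Var) :
    {μ ∈ mjoin Ω1 Ω2 | μ v ≠ none} =
      mjoin {μ ∈ Ω1 | μ v ≠ none} Ω2 ∪ mjoin Ω1 {μ ∈ Ω2 | μ v ≠ none} := by
  ext μ
  simp only [mjoin, Set.mem_union, Set.mem_ofPred_eq]
  constructor
  · rintro ⟨⟨μ1, h1, μ2, h2, hc, rfl⟩, hb⟩
    rcases (munion_ne_none_iff _ _ _).mp hb with hb | hb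
    · exact Or.inl ⟨μ1, ⟨h1, hb⟩, μ2, h2, hc, rfl⟩
    · exact Or.inr ⟨μ1, h1, μ2, ⟨h2, hb⟩, hc, rfl⟩
  · rintro (⟨μ1, ⟨h1, hb⟩, μ2, h2, hc, rfl⟩ | ⟨μ1, h1, μ2, ⟨h2, hb⟩, hc, rfl⟩)
    · exact ⟨⟨μ1, h1, μ2, h2, hc, rfl⟩, (munion_ne_none_iff _ _ _).mpr (Or.inl hb)⟩
    · exact ⟨⟨μ1, h1, μ2, h2, hc, rfl⟩, (munion_ne_none_iff _ _ _).mpr (Or.inr hb)⟩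

theorem mjoin_sep_bound_singleton_single {v w : Var} (h : w ≠ v) (Ω : Set Mapping) (o : Obj) :
    mjoin {μ ∈ Ω | μ v ≠ none} {single w o} = {μ ∈ mjoin Ω {single w o} | μ v ≠ none} := by
  have hv : ∀ μ1 : Mapping, munion μ1 (single w o) v = μ1 v := fun μ1 => by
    cases h1 : μ1 v with
    | some a => exact munion_apply_of_eq_some h1 _
    | none => rw [munion_apply_of_eq_none h1, single_apply_of_ne _ (Ne.symm h)]
  ext μ
  simp only [mjoin, Set.mem_singleton_iff, Set.mem_ofPred_eq]
  constructor
  · rintro ⟨μ1, ⟨h1, hb⟩, _, rfl, hc, rfl⟩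
    exact ⟨⟨μ1, h1, _, rfl, hc, rfl⟩, by rwa [hv]⟩
  · rintro ⟨⟨μ1, h1, _, rfl, hc, rfl⟩, hb⟩
    exact ⟨μ1, ⟨h1, by rwa [hv] at hb⟩, _, rfl, hc, rfl⟩

theorem image_restrictV_sep_bound {v : Var} {V0 : Finset Var} (h : v ∈ V0) (Ω : Set Mapping) :
    restrictV V0 '' {μ ∈ Ω | μ v ≠ none} = {μ ∈ restrictV V0 '' Ω | μ v ≠ none} := by
  have hv : ∀ μ : Mapping, restrictV V0 μ v = μ v := fun μ => by simp [restrictV, h]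
  ext μ
  simp only [Set.mem_image, Set.mem_ofPred_eq]
  constructor
  · rintro ⟨μ', ⟨h1, hb⟩, rfl⟩
    exact ⟨⟨μ', h1, rfl⟩, by rwa [hv]⟩
  · rintro ⟨⟨μ', h1, rfl⟩, hb⟩
    exact ⟨μ', ⟨h1, by rwa [hv] at hb⟩, rfl⟩

theorem sep_image_restrictV_bound_of_notMem {v : Var} {V0 : Finset Var} (h : v ∉ V0)
    (Ω : Set Mapping) : {μ ∈ restrictV V0 '' Ω | μ v ≠ none} = ∅ := by
  refine Set.eq_empty_iff_forall_notMem.mpr ?_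
  rintro _ ⟨⟨μ, -, rfl⟩, hb⟩
  exact hb (by simp [restrictV, h])

theorem evalQ_boundQ (W : Web) (v : Var) (q : LDQL) (S : Set URI) :
    evalQ W (boundQ v q) S = {μ ∈ evalQ W q S | μ v ≠ none} := by
  match q with
  | .base l P =>
    ext μ
    simp [boundQ, evalQ, evalGP, condHolds, pval, Option.ne_none_iff_exists']
  | .seedU U0 q =>
    rw [boundQ, evalQ, evalQ, evalQ_boundQ W v q]
  | .seedV w q =>
    by_cases h : w = v
    · subst h
      rw [boundQ, if_pos rfl]
      exact (Set.sep_eq_self_iff_mem_true.mpr fun _ => ne_none_of_mem_evalQ_seedV).symm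
    · simp only [boundQ, if_neg h, evalQ, evalQ_boundQ W v q,
        mjoin_sep_bound_singleton_single h]
      ext μ
      simp only [Set.mem_iUnion, Set.mem_ofPred_eq, exists_and_right]
  | .qand q1 q2 =>
    rw [boundQ, evalQ, evalQ, evalQ, evalQ, evalQ_boundQ W v q1, evalQ_boundQ W v q2,
      sep_mjoin_bound]
  | .qunion q1 q2 =>
    rw [boundQ, evalQ, evalQ, evalQ_boundQ W v q1, evalQ_boundQ W v q2]
    exact Set.sep_union.symm
  | .proj V0 q =>
    by_cases h : v ∈ V0
    · rw [boundQ, if_pos h, evalQ, evalQ, evalQ_boundQ W v q, image_restrictV_sep_bound h]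
    · rw [boundQ, if_neg h, evalQ_qFalse, evalQ, sep_image_restrictV_bound_of_notMem h]

theorem LDQL.simple.boundQ {q : LDQL} (h : q.simple) (v : Var) : (boundQ v q).simple := by
  match q with
  | .base _ _ => exact h
  | .seedU _ q => exact LDQL.simple.boundQ (q := q) h v
  | .seedV w q =>
    unfold LDQLFormal.boundQ
    split_ifs
    exacts [h, LDQL.simple.boundQ (q := q) h v]
  | .qand q1 q2 =>
    exact ⟨⟨LDQL.simple.boundQ h.1 v, h.2⟩, ⟨h.1, LDQL.simple.boundQ h.2 v⟩⟩
  | .qunion q1 q2 => exact ⟨LDQL.simple.boundQ h.1 v, LDQL.simple.boundQ h.2 v⟩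
  | .proj V0 q =>
    unfold LDQLFormal.boundQ
    split_ifs
    exacts [LDQL.simple.boundQ (q := q) h v, trivial]

/-- Joining with `SEED ?v` alone would also accept the solutions leaving `?v` unbound. -/
def bindsUriQ (v : Var) (Q : LDQL) : LDQL := .proj ∅ (.qand (boundQ v Q) (.seedV v qTrue))

theorem evalQ_bindsUriQ (W : Web) (v : Var) (Q : LDQL) (S : Set URI) :
    evalQ W (bindsUriQ v Q) S = boolSols (∃ μ ∈ evalQ W Q S, ∃ x, μ v = some (.uri x)) := by
  rw [bindsUriQ, evalQ, evalQ, evalQ_boundQ, evalQ_seedV_of_boolSols (evalQ_qTrue W),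
    image_restrictV_empty]
  congr 1
  apply propext
  constructor
  · rintro ⟨_, μ, ⟨hμ, hv⟩, _, ⟨x, -, rfl⟩, hc, rfl⟩
    rw [compatible_comm, compatible_uriSol_left_iff] at hc
    exact ⟨μ, hμ, x, hc.resolve_left hv⟩
  · rintro ⟨μ, hμ, x, hx⟩
    refine ⟨_, μ, ⟨hμ, by simp [hx]⟩, _, ⟨x, trivial, rfl⟩, ?_, rfl⟩
    rw [compatible_comm, compatible_uriSol_left_iff]
    exact Or.inr hx

/-! ### The translation -/

def ComputesOnAdom (W : Web) (A l : LPE) : Prop := ∀ u, evalL W A u = evalL W l u ∩ adom W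

def DecidesNonempty (W : Web) (Q : LDQL) (l : LPE) : Prop :=
  ∀ u, evalQ W Q {u} = boolSols (evalL W l u).Nonempty

section ComputesOnAdom

variable {W : Web}

theorem computesOnAdom_eps : ComputesOnAdom W .eps .eps := fun u => by
  ext x; simp +contextual [evalL_eps]

theorem computesOnAdom_linkPatternL (lp : LinkPattern) :
    ComputesOnAdom W (linkPatternL lp) (.pat lp) := fun u => by
  rw [evalL_linkPatternL, Set.inter_eq_left.mpr (evalL_pat_subset_adom W lp u)]

theorem ComputesOnAdom.concatL {A B l1 l2 : LPE} (h1 : ComputesOnAdom W A l1)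
    (h2 : ComputesOnAdom W B l2) : ComputesOnAdom W (concatL A B) (.seq l1 l2) := fun u => by
  rw [evalL_concatL, evalL]
  ext y
  simp only [h1 u, show ∀ x, evalL W B x = evalL W l2 x ∩ adom W from h2, Set.inter_assoc, Set.inter_self, Set.mem_ofPred_eq, Set.mem_inter_iff]
  constructor
  · rintro ⟨x, ⟨hx, -⟩, hy, hya⟩
    exact ⟨⟨x, hx, hy⟩, hya⟩
  · rintro ⟨⟨x, hx, hy⟩, hya⟩
    exact ⟨x, ⟨hx, mem_adom_of_mem_evalL hy⟩, hy, hya⟩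

theorem ComputesOnAdom.unionL {A B l1 l2 : LPE} (h1 : ComputesOnAdom W A l1)
    (h2 : ComputesOnAdom W B l2) : ComputesOnAdom W (unionL A B) (.alt l1 l2) := fun u => by
  rw [evalL_unionL, h1 u, h2 u, evalL, ← Set.union_inter_distrib_right, Set.inter_assoc,
    Set.inter_self]

/-- A step of `l` can only start at a URI with a document, so every intermediate node of a
path lies in `adom W`. -/
theorem ComputesOnAdom.star {A l : LPE} (h : ComputesOnAdom W A l) :
    ComputesOnAdom W (.star A) (.star l) := fun u => by
  simp only [evalL]
  ext x
  simp only [Set.mem_ofPred_eq, Set.mem_inter_iff]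
  constructor
  · rintro ⟨hu, hr⟩
    refine ⟨⟨hu, Relation.ReflTransGen.mono (fun a b hb => by rw [h a] at hb; exact hb.1) _ _ hr⟩, ?_⟩
    rcases hr.cases_tail with rfl | ⟨c, -, hc⟩
    · exact hu
    · rw [h c] at hc; exact hc.2
  · rintro ⟨⟨hu, hr⟩, hx⟩
    refine ⟨hu, ?_⟩
    induction hr with
    | refl => exact .refl
    | tail _ hbc ih => exact (ih (mem_adom_of_mem_evalL hbc)).tail (by rw [h]; exact ⟨hbc, hx⟩)

theorem computesOnAdom_guardL {Q : LDQL} {l : LPE} (h : DecidesNonempty W Q l) :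
    ComputesOnAdom W (guardL Q) (.test l) := fun u => by
  rw [evalL_guardL (h u), evalL]
  ext x
  simp only [Set.mem_ofPred_eq, Set.mem_inter_iff, Set.nonempty_iff_ne_empty]
  constructor
  · rintro ⟨rfl, hx, hne⟩; exact ⟨⟨rfl, hne⟩, hx⟩
  · rintro ⟨⟨rfl, hne⟩, hx⟩; exact ⟨rfl, hx, hne⟩

theorem computesOnAdom_restrictL_sub {Q q : LDQL} (h : ∀ S, evalQ W Q S = evalQ W q S)
    (v : Var) : ComputesOnAdom W (restrictL (.sub v Q)) (.sub v q) := fun u => by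
  rw [evalL_restrictL, evalL_sub, evalL_sub, h]

theorem evalQ_base_of_computesOnAdom {A l : LPE} (h : ComputesOnAdom W A l) (P : GP)
    (S : Set URI) : evalQ W (.base A P) S = evalQ W (.base l P) S := by
  have hS : {x | ∃ u ∈ S, x ∈ evalL W A u} = {x | ∃ u ∈ S, x ∈ evalL W l u} ∩ adom W := by
    ext x
    simp only [h _, Set.mem_ofPred_eq, Set.mem_inter_iff]
    exact ⟨fun ⟨u, hu, hx, ha⟩ => ⟨⟨u, hu, hx⟩, ha⟩, fun ⟨⟨u, hu, hx⟩, ha⟩ => ⟨u, hu, hx, ha⟩⟩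
  rw [evalQ, evalQ, hS, datasetW_inter_adom]

end ComputesOnAdom

section DecidesNonempty

variable {W : Web}

theorem DecidesNonempty.congr {Q : LDQL} {l l' : LPE} (h : DecidesNonempty W Q l)
    (hl : ∀ u, (evalL W l u).Nonempty ↔ (evalL W l' u).Nonempty) : DecidesNonempty W Q l' :=
  fun u => by rw [h u, hl u]

theorem decidesNonempty_hitsAdomQ {A l : LPE} (h : ComputesOnAdom W A l)
    (hl : ∀ u, evalL W l u ⊆ adom W) : DecidesNonempty W (hitsAdomQ A) l := fun u => by
  rw [evalQ_hitsAdomQ, h u, Set.inter_assoc, Set.inter_self, Set.inter_eq_left.mpr (hl u)]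

theorem decidesNonempty_eps : DecidesNonempty W (hitsAdomQ .eps) .eps :=
  decidesNonempty_hitsAdomQ computesOnAdom_eps fun u x hx => by
    rw [evalL_eps] at hx
    exact hx.1 ▸ hx.2

theorem decidesNonempty_star (l : LPE) : DecidesNonempty W (hitsAdomQ .eps) (.star l) :=
  decidesNonempty_eps.congr fun u => by
    rw [evalL_nonempty_eps_iff, evalL_nonempty_star_iff]

theorem decidesNonempty_test {Q : LDQL} {l : LPE} (h : DecidesNonempty W Q l) :
    DecidesNonempty W Q (.test l) :=
  h.congr fun u => by
    rw [evalL, Set.nonempty_iff_ne_empty]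
    exact ⟨fun hne => ⟨u, rfl, hne⟩, fun ⟨_, _, hne⟩ => hne⟩

theorem DecidesNonempty.qunion {Q1 Q2 : LDQL} {l1 l2 : LPE} (h1 : DecidesNonempty W Q1 l1)
    (h2 : DecidesNonempty W Q2 l2) : DecidesNonempty W (.qunion Q1 Q2) (.alt l1 l2) :=
  fun u => by rw [evalQ, h1 u, h2 u, boolSols_union, evalL, Set.union_nonempty]

theorem decidesNonempty_existsQ {A l1 l2 : LPE} {Q : LDQL} (h1 : ComputesOnAdom W A l1)
    (h2 : DecidesNonempty W Q l2) : DecidesNonempty W (existsQ A Q) (.seq l1 l2) := fun u => by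
  rw [evalQ_existsQ h2, h1 u, Set.inter_assoc, Set.inter_self, evalL]
  congr 1
  apply propext
  constructor
  · rintro ⟨x, ⟨hx, -⟩, y, hy⟩; exact ⟨y, x, hx, hy⟩
  · rintro ⟨y, x, hx, hy⟩; exact ⟨x, ⟨hx, mem_adom_of_mem_evalL hy⟩, y, hy⟩

theorem decidesNonempty_sub {Q q : LDQL} (h : ∀ S, evalQ W Q S = evalQ W q S) (v : Var) :
    DecidesNonempty W (.qand (hitsAdomQ .eps) (bindsUriQ v Q)) (.sub v q) := fun u => by
  rw [evalQ, decidesNonempty_eps u, evalQ_bindsUriQ, mjoin_boolSols_right,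
    evalL_nonempty_eps_iff, h, evalL_sub]
  ext μ
  simp only [boolSols, Set.mem_ofPred_eq]
  constructor
  · rintro ⟨⟨hu, rfl⟩, μ', hμ', x, hx⟩; exact ⟨⟨x, hu, μ', hμ', hx⟩, rfl⟩
  · rintro ⟨⟨x, hu, μ', hμ', hx⟩, rfl⟩; exact ⟨⟨hu, rfl⟩, μ', hμ', x, hx⟩

end DecidesNonempty

mutual
def LDQL.toSimple : LDQL → LDQL
  | .base l P => .base l.toSimple P
  | .seedU U0 q => .seedU U0 q.toSimple
  | .seedV v q => .seedV v q.toSimple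
  | .qand q1 q2 => .qand q1.toSimple q2.toSimple
  | .qunion q1 q2 => .qunion q1.toSimple q2.toSimple
  | .proj V0 q => .proj V0 q.toSimple

def LPE.toSimple : LPE → LPE
  | .eps => .eps
  | .pat lp => linkPatternL lp
  | .seq l1 l2 => concatL l1.toSimple l2.toSimple
  | .alt l1 l2 => unionL l1.toSimple l2.toSimple
  | .star l => .star l.toSimple
  | .test l => guardL l.nonemptyQ
  | .sub v q => restrictL (.sub v q.toSimple)

def LPE.nonemptyQ : LPE → LDQL
  | .eps => hitsAdomQ .eps
  | .pat lp => hitsAdomQ (linkPatternL lp)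
  | .seq l1 l2 => existsQ l1.toSimple l2.nonemptyQ
  | .alt l1 l2 => .qunion l1.nonemptyQ l2.nonemptyQ
  | .star _ => hitsAdomQ .eps
  | .test l => l.nonemptyQ
  | .sub v q => .qand (hitsAdomQ .eps) (bindsUriQ v q.toSimple)
end

mutual
theorem LDQL.evalQ_toSimple (W : Web) : ∀ (q : LDQL) (S : Set URI),
    evalQ W q.toSimple S = evalQ W q S
  | .base l P, S => evalQ_base_of_computesOnAdom (l.computesOnAdom_toSimple W) P S
  | .seedU U0 q, _ => q.evalQ_toSimple W U0
  | .seedV v q, _ => by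
    simp only [LDQL.toSimple, evalQ, q.evalQ_toSimple W]
  | .qand q1 q2, S => by
    simp only [LDQL.toSimple, evalQ, q1.evalQ_toSimple W, q2.evalQ_toSimple W]
  | .qunion q1 q2, S => by
    simp only [LDQL.toSimple, evalQ, q1.evalQ_toSimple W, q2.evalQ_toSimple W]
  | .proj V0 q, S => by
    simp only [LDQL.toSimple, evalQ, q.evalQ_toSimple W]

theorem LPE.computesOnAdom_toSimple (W : Web) : ∀ l : LPE, ComputesOnAdom W l.toSimple l
  | .eps => computesOnAdom_eps
  | .pat lp => computesOnAdom_linkPatternL lp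
  | .seq l1 l2 => (l1.computesOnAdom_toSimple W).concatL (l2.computesOnAdom_toSimple W)
  | .alt l1 l2 => (l1.computesOnAdom_toSimple W).unionL (l2.computesOnAdom_toSimple W)
  | .star l => (l.computesOnAdom_toSimple W).star
  | .test l => computesOnAdom_guardL (l.decidesNonempty_nonemptyQ W)
  | .sub v q => computesOnAdom_restrictL_sub (q.evalQ_toSimple W) v

theorem LPE.decidesNonempty_nonemptyQ (W : Web) : ∀ l : LPE, DecidesNonempty W l.nonemptyQ l
  | .eps => decidesNonempty_eps
  | .pat lp => decidesNonempty_hitsAdomQ (computesOnAdom_linkPatternL lp)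
      (evalL_pat_subset_adom W lp)
  | .seq l1 l2 =>
    decidesNonempty_existsQ (l1.computesOnAdom_toSimple W) (l2.decidesNonempty_nonemptyQ W)
  | .alt l1 l2 => (l1.decidesNonempty_nonemptyQ W).qunion (l2.decidesNonempty_nonemptyQ W)
  | .star l => decidesNonempty_star l
  | .test l => decidesNonempty_test (l.decidesNonempty_nonemptyQ W)
  | .sub v q => decidesNonempty_sub (q.evalQ_toSimple W) v
end

theorem LPE.simple_linkPatternL (lp : LinkPattern) : (linkPatternL lp).simple := by
  unfold linkPatternL linkBranchL
  split_ifs <;> exact ⟨trivial, trivial, trivial⟩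

mutual
theorem LDQL.simple_toSimple : ∀ q : LDQL, q.toSimple.simple
  | .base l _ => l.simple_toSimple
  | .seedU _ q => q.simple_toSimple
  | .seedV _ q => q.simple_toSimple
  | .qand q1 q2 => ⟨q1.simple_toSimple, q2.simple_toSimple⟩
  | .qunion q1 q2 => ⟨q1.simple_toSimple, q2.simple_toSimple⟩
  | .proj _ q => q.simple_toSimple

theorem LPE.simple_toSimple : ∀ l : LPE, l.toSimple.simple
  | .eps => trivial
  | .pat lp => LPE.simple_linkPatternL lp
  | .seq l1 l2 => ⟨l1.simple_toSimple, l2.simple_toSimple⟩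
  | .alt l1 l2 => ⟨l1.simple_toSimple, l2.simple_toSimple⟩
  | .star l => l.simple_toSimple
  | .test l => ⟨trivial, l.simple_nonemptyQ⟩
  | .sub _ q => q.simple_toSimple

theorem LPE.simple_nonemptyQ : ∀ l : LPE, l.nonemptyQ.simple
  | .eps => trivial
  | .pat lp => LPE.simple_linkPatternL lp
  | .seq l1 l2 => ⟨l1.simple_toSimple, l2.simple_nonemptyQ⟩
  | .alt l1 l2 => ⟨l1.simple_nonemptyQ, l2.simple_nonemptyQ⟩
  | .star _ => trivial
  | .test l => l.simple_nonemptyQ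
  | .sub v q => ⟨trivial, (q.simple_toSimple).boundQ v, trivial⟩
end

/-- Every LDQL query is equivalent to one all of whose LPEs
are built only from `ε`, `⟨?v,q⟩` and `(·)*`. -/
theorem exists_equivalent_simple_LDQL (q : LDQL) :
    ∃ q' : LDQL,
      (∀ (W : Web) (S : Set URI), S.Finite → evalQ W q S = evalQ W q' S) ∧
      q'.simple :=
  ⟨q.toSimple, fun W S _ => (q.evalQ_toSimple W S).symm, q.simple_toSimple⟩

end

end LDQLFormal
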